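/- Let A be a reduced order with inner product ⟨x,y⟩ = ∑_{σ: A→ℂ} σ(x)·conj(σ(y)), graded by an abelian group Γ via (B_γ)_{γ∈Γ}. Then distinct homogeneous components are orthogonal: if γ ≠ δ then ⟨B_γ, B_δ⟩ = 0. -/

import Mathlib

/-- A `Γ`-grading of a commutative ring `A`: a family of additive subgroups
`B γ` with `B γ * B δ ⊆ B (γ*δ)` such that every element of `A` has a unique
finitely-supported decomposition into homogeneous components. -/
def IsGrading {A Γ : Type*} [CommRing A] [CommGroup Γ] (B : Γ → AddSubgroup A) : Prop :=
  (∀ γ δ : Γ, ∀ x ∈ B γ, ∀ y ∈ B δ, x * y ∈ B (γ * δ)) ∧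
  (∀ a : A, ∃! f : Γ →₀ A, (∀ γ, f γ ∈ B γ) ∧ f.sum (fun _ x => x) = a)


/-- The natural inner product on a (reduced) order:
`⟨x, y⟩ = ∑ σ, σ x * conj (σ y)`, where `σ` ranges over all ring homomorphisms
`A → ℂ` (a finite set when `A` is a reduced order); the value is real. -/
noncomputable def ordPairing (A : Type*) [CommRing A] (x y : A) : ℝ :=
  ∑ᶠ σ : A →+* ℂ, (σ x * (starRingEnd ℂ) (σ y)).re

/-!
A ring homomorphism `σ : A →+* ℂ` can be twisted by a character `u : Γ →* S¹`, acting on `B γ`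
as `x ↦ u γ * σ x`. Since `1 ∈ B 1` this is again a ring homomorphism, and twisting by `u⁻¹`
undoes it, so twisting permutes the finitely many `σ`. For `x ∈ B γ` and `y ∈ B δ` it multiplies
every term `σ x * conj (σ y)` of the pairing by `u γ * conj (u δ) = u (γ * δ⁻¹)`. Characters into
`S¹` separate the points of an abelian group, so we may choose `u (γ * δ⁻¹) ≠ 1`; the complex sum
`S` then satisfies `S = u (γ * δ⁻¹) * S`, hence `S = 0`.
-/

namespace IsGrading

variable {A Γ : Type*} [CommRing A] [CommGroup Γ] {B : Γ → AddSubgroup A}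

noncomputable def decompose (hB : IsGrading B) : A →+ (Γ →₀ A) where
  toFun a := (hB.2 a).choose
  map_zero' := (hB.2 0).unique (hB.2 0).choose_spec.1
    ⟨fun _ => zero_mem _, Finsupp.sum_zero_index⟩
  map_add' a b := (hB.2 (a + b)).unique (hB.2 (a + b)).choose_spec.1
    ⟨fun γ => add_mem ((hB.2 a).choose_spec.1.1 γ) ((hB.2 b).choose_spec.1.1 γ), by
      rw [Finsupp.sum_add_index' (fun _ => rfl) (fun _ _ _ => rfl),
        (hB.2 a).choose_spec.1.2, (hB.2 b).choose_spec.1.2]⟩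

lemma decompose_mem (hB : IsGrading B) (a : A) (γ : Γ) : hB.decompose a γ ∈ B γ :=
  (hB.2 a).choose_spec.1.1 γ

lemma sum_decompose (hB : IsGrading B) (a : A) : (hB.decompose a).sum (fun _ x => x) = a :=
  (hB.2 a).choose_spec.1.2

lemma decompose_of_mem (hB : IsGrading B) {γ : Γ} {x : A} (hx : x ∈ B γ) :
    hB.decompose x = Finsupp.single γ x := by
  classical
  refine ((hB.2 x).choose_spec.2 _ ⟨fun δ => ?_, Finsupp.sum_single_index rfl⟩).symm
  rw [Finsupp.single_apply]
  split_ifs with h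
  · exact h ▸ hx
  · exact zero_mem _

lemma addMonoidHom_ext (hB : IsGrading B) {M : Type*} [AddCommMonoid M] {f g : A →+ M}
    (h : ∀ γ, ∀ x ∈ B γ, f x = g x) : f = g := by
  ext a
  rw [← hB.sum_decompose a, map_finsuppSum, map_finsuppSum]
  exact Finsupp.sum_congr fun γ _ => h γ _ (hB.decompose_mem a γ)

lemma decompose_mul_apply_mul_of_mem (hB : IsGrading B) (a : A) {δ : Γ} {x : A} (hx : x ∈ B δ)
    (γ : Γ) :
    hB.decompose (a * x) (γ * δ) = hB.decompose a γ * x := by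
  classical
  have key := hB.addMonoidHom_ext
    (f := (Finsupp.applyAddHom (γ * δ)).comp (hB.decompose.comp (AddMonoidHom.mulRight x)))
    (g := (AddMonoidHom.mulRight x).comp ((Finsupp.applyAddHom γ).comp hB.decompose))
    fun γ' y hy => by
      by_cases h : γ' = γ <;>
        simp [hB.decompose_of_mem hy, hB.decompose_of_mem (hB.1 _ _ _ hy _ hx), h]
  exact DFunLike.congr_fun key a

lemma one_mem (hB : IsGrading B) : (1 : A) ∈ B 1 := by
  classical
  set e := hB.decompose 1
  have hmul : ∀ γ ≠ 1, ∀ δ, ∀ x ∈ B δ, e γ * x = 0 := fun γ hγ δ x hx => by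
    rw [← hB.decompose_mul_apply_mul_of_mem 1 hx, one_mul, hB.decompose_of_mem hx,
      Finsupp.single_apply, if_neg (by simpa using hγ)]
  have hsupp : ∀ γ ≠ 1, e γ = 0 := fun γ hγ => calc
    e γ = e γ * e.sum (fun _ y => y) := by rw [hB.sum_decompose, mul_one]
    _ = 0 := by
      rw [Finsupp.mul_sum]
      exact Finset.sum_eq_zero fun δ _ => hmul γ hγ δ _ (hB.decompose_mem 1 δ)
  have hsingle : e = Finsupp.single 1 (e 1) := by
    ext γ
    by_cases hγ : γ = 1
    · simp [hγ]
    · simp [hsupp γ hγ, hγ]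
  have h1 : e.sum (fun _ x => x) = 1 := hB.sum_decompose 1
  rw [hsingle, Finsupp.sum_single_index rfl] at h1
  exact h1 ▸ hB.decompose_mem 1 1

variable {R : Type*} [CommSemiring R]

noncomputable def twistAddHom (hB : IsGrading B) (u : Γ → R) (σ : A →+ R) : A →+ R :=
  (Finsupp.liftAddHom fun γ => (AddMonoidHom.mulLeft (u γ)).comp σ).comp hB.decompose

lemma twistAddHom_apply_of_mem (hB : IsGrading B) (u : Γ → R) (σ : A →+ R) {γ : Γ} {x : A}
    (hx : x ∈ B γ) : hB.twistAddHom u σ x = u γ * σ x := by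
  simp [twistAddHom, hB.decompose_of_mem hx]

noncomputable def twist (hB : IsGrading B) (u : Γ →* R) (σ : A →+* R) : A →+* R :=
  { hB.twistAddHom u σ.toAddMonoidHom with
    map_one' := by
      simp [hB.twistAddHom_apply_of_mem _ _ hB.one_mem]
    map_mul' := (AddMonoidHom.map_mul_iff _).2 <|
      hB.addMonoidHom_ext fun γ x hx => hB.addMonoidHom_ext fun δ y hy => by
        simp only [AddMonoidHom.compr₂_apply, AddMonoidHom.compl₂_apply, AddMonoidHom.mul_apply,
          AddMonoidHom.comp_apply, hB.twistAddHom_apply_of_mem _ _ hx,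
          hB.twistAddHom_apply_of_mem _ _ hy, hB.twistAddHom_apply_of_mem _ _ (hB.1 _ _ _ hx _ hy)]
        simp only [RingHom.toAddMonoidHom_eq_coe, AddMonoidHom.coe_coe, map_mul]
        ring }

lemma twist_apply_of_mem (hB : IsGrading B) (u : Γ →* R) (σ : A →+* R) {γ : Γ} {x : A}
    (hx : x ∈ B γ) : hB.twist u σ x = u γ * σ x :=
  hB.twistAddHom_apply_of_mem u σ.toAddMonoidHom hx

lemma twist_twist (hB : IsGrading B) (u v : Γ →* R) (σ : A →+* R) :
    hB.twist v (hB.twist u σ) = hB.twist (u * v) σ :=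
  RingHom.coe_addMonoidHom_injective <| hB.addMonoidHom_ext fun γ x hx => by
    simp only [AddMonoidHom.coe_coe, hB.twist_apply_of_mem _ _ hx, MonoidHom.mul_apply]
    ring

lemma twist_one (hB : IsGrading B) (σ : A →+* R) : hB.twist 1 σ = σ :=
  RingHom.coe_addMonoidHom_injective <| hB.addMonoidHom_ext fun γ x hx => by
    simp [hB.twist_apply_of_mem _ _ hx]

lemma twist_units_bijective (hB : IsGrading B) (u : Γ →* Rˣ) :
    Function.Bijective (hB.twist ((Units.coeHom R).comp u)) :=
  have huv : (Units.coeHom R).comp u * (Units.coeHom R).comp u⁻¹ = 1 := by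
    rw [← MonoidHom.comp_mul, mul_inv_cancel, MonoidHom.comp_one]
  Function.bijective_iff_has_inverse.2 ⟨hB.twist ((Units.coeHom R).comp u⁻¹),
    fun σ => by rw [twist_twist, huv, twist_one],
    fun σ => by rw [twist_twist, mul_comm, huv, twist_one]⟩

end IsGrading

lemma CommGroup.exists_monoidHom_circle_apply_ne_one {G : Type*} [CommGroup G] {g : G}
    (hg : g ≠ 1) : ∃ χ : G →* Circle, χ g ≠ 1 := by
  obtain ⟨c, hc⟩ := CharacterModule.exists_character_apply_ne_zero_of_ne_zero
    (a := Additive.ofMul g) (by simpa using hg)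
  let ι : AddCircle (1 : ℚ) →+ AddCircle (1 : ℝ) :=
    QuotientAddGroup.map _ _ (Rat.castHom ℝ).toAddMonoidHom <| by
      rw [AddSubgroup.zmultiples_le]
      simp
  have hι : ∀ q, ι q = 0 → q = 0 := by
    intro q hq
    induction q using QuotientAddGroup.induction_on with | H q => ?_
    obtain ⟨n, hn⟩ := (AddCircle.coe_eq_zero_iff (1 : ℝ)).1 hq
    exact (AddCircle.coe_eq_zero_iff (1 : ℚ)).2 ⟨n, by
      simp only [zsmul_one, RingHom.toAddMonoidHom_eq_coe, AddMonoidHom.coe_coe, eq_ratCast]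
        at hn ⊢
      exact_mod_cast hn⟩
  refine ⟨{ toFun h := AddCircle.toCircle (ι (c (Additive.ofMul h)))
            map_one' := by simp
            map_mul' h k := by simp [AddCircle.toCircle_add] }, fun h => hc (hι _ ?_)⟩
  exact AddCircle.injective_toCircle one_ne_zero (h.trans AddCircle.toCircle_zero.symm)

instance finite_ringHom_of_moduleFinite_int (A K : Type*) [Ring A] [Field K]
    [Module.Finite ℤ A] :
    Finite (A →+* K) :=
  .of_equiv _ (RingHom.equivIntAlgHom A K).symm

lemma finsum_eq_zero_of_comp_eq_mul {α K : Type*} [Ring K] [NoZeroDivisors K] {e : α → α}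
    (he : Function.Bijective e) {c : K} (hc : c ≠ 1) {f : α → K} (hf : ∀ a, f (e a) = c * f a) :
    ∑ᶠ a, f a = 0 := by
  have h : ∑ᶠ a, f a = c * ∑ᶠ a, f a := calc
    ∑ᶠ a, f a = ∑ᶠ a, f (e a) := (finsum_comp e he).symm
    _ = c * ∑ᶠ a, f a := by rw [mul_finsum]; exact finsum_congr hf
  have : (1 - c) * ∑ᶠ a, f a = 0 := by rw [sub_mul, one_mul, ← h, sub_self]
  exact (mul_eq_zero.1 this).resolve_left (sub_ne_zero.2 hc.symm)

lemma ordPairing_eq_re_finsum (A : Type*) [CommRing A] [Module.Finite ℤ A] (x y : A) :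
    ordPairing A x y = (∑ᶠ σ : A →+* ℂ, σ x * (starRingEnd ℂ) (σ y)).re := by
  rw [ordPairing]
  exact (Complex.reAddGroupHom.map_finsum
    (f := fun σ : A →+* ℂ => σ x * (starRingEnd ℂ) (σ y)) (Set.toFinite _)).symm

theorem grading_components_orthogonal_general {A Γ : Type*} [CommRing A]
    [Module.Finite ℤ A] [CommGroup Γ]
    (B : Γ → AddSubgroup A) (hB : IsGrading B)
    (γ δ : Γ) (hne : γ ≠ δ) :
    ∀ x ∈ B γ, ∀ y ∈ B δ, ordPairing A x y = 0 := by
  intro x hx y hy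
  obtain ⟨χ, hχ⟩ := CommGroup.exists_monoidHom_circle_apply_ne_one (mul_inv_eq_one.not.2 hne)
  rw [ordPairing_eq_re_finsum, finsum_eq_zero_of_comp_eq_mul
    (hB.twist_units_bijective (Circle.toUnits.comp χ)) (Circle.coe_eq_one.not.2 hχ) fun σ => ?_,
    Complex.zero_re]
  simp only [hB.twist_apply_of_mem _ _ hx, hB.twist_apply_of_mem _ _ hy, MonoidHom.comp_apply,
    Units.coeHom_apply, Circle.toUnits_apply, Units.val_mk0, map_mul, map_inv, Circle.coe_mul,
    Circle.coe_inv_eq_conj]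
  ring

/-- In a graded reduced order, distinct homogeneous components are orthogonal
for the natural inner product. -/
theorem grading_components_orthogonal {A Γ : Type*} [CommRing A] [IsReduced A]
    [Module.Free ℤ A] [Module.Finite ℤ A] [CommGroup Γ]
    (B : Γ → AddSubgroup A) (hB : IsGrading B)
    (γ δ : Γ) (hne : γ ≠ δ) :
    ∀ x ∈ B γ, ∀ y ∈ B δ, ordPairing A x y = 0 :=
  grading_components_orthogonal_general B hB γ δ hne
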